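/- Let n ≥ 5 be odd and let G be K_{n,n} minus a perfect matching. Then χ(G) = 2 and χ^FAT(G) = n. -/

import Mathlib

open SimpleGraph
open scoped Classical

/-- A FAT `k`-coloring of a graph `G`: a partition of the vertex set into `k`
nonempty color classes `P 0, ..., P (k-1)` together with parameters
`α, β ∈ [0,1]` such that every vertex `v` has exactly `α · deg v` neighbors in
each class not containing `v` and exactly `β · deg v` neighbors in its own class. -/
def IsFATColoring {V : Type*} (G : SimpleGraph V) (k : ℕ)
    (P : Fin k → Set V) (α β : ℝ) : Prop :=
  (∀ i, (P i).Nonempty) ∧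
  (∀ v : V, ∃! i, v ∈ P i) ∧
  0 ≤ α ∧ α ≤ 1 ∧ 0 ≤ β ∧ β ≤ 1 ∧
  ∀ (v : V) (i : Fin k),
    ((G.neighborSet v ∩ P i).ncard : ℝ) =
      if v ∈ P i then β * (G.neighborSet v).ncard
      else α * (G.neighborSet v).ncard

/-- The FAT chromatic number of `G`: the largest `k` for which `G` admits a
FAT `k`-coloring. -/
noncomputable def fatChromaticNumber {V : Type*} (G : SimpleGraph V) : ℕ :=
  sSup {k : ℕ | ∃ P : Fin k → Set V, ∃ α β : ℝ, IsFATColoring G k P α β}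

/-- `K_{n,n}` minus a perfect matching: parts `{x₁,...,xₙ}` (left) and
`{y₁,...,yₙ}` (right), with `xᵢ` adjacent to `yⱼ` iff `i ≠ j`. -/
def KnnMinusMatching (n : ℕ) : SimpleGraph (Fin n ⊕ Fin n) where
  Adj a b :=
    match a, b with
    | Sum.inl i, Sum.inr j => i ≠ j
    | Sum.inr i, Sum.inl j => i ≠ j
    | _, _ => False
  symm := by
    constructor
    rintro (i | i) (j | j) h
    · exact h.elim
    · exact fun e => h e.symm
    · exact fun e => h e.symm
    · exact h.elim
  loopless := by
    constructor
    rintro (i | i) h <;> exact h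

lemma adj_lr {n : ℕ} {i j : Fin n} : (KnnMinusMatching n).Adj (Sum.inl i) (Sum.inr j) ↔ i ≠ j := Iff.rfl
lemma adj_rl {n : ℕ} {i j : Fin n} : (KnnMinusMatching n).Adj (Sum.inr i) (Sum.inl j) ↔ i ≠ j := Iff.rfl
lemma adj_ll {n : ℕ} {i j : Fin n} : ¬ (KnnMinusMatching n).Adj (Sum.inl i) (Sum.inl j) := fun h => h
lemma adj_rr {n : ℕ} {i j : Fin n} : ¬ (KnnMinusMatching n).Adj (Sum.inr i) (Sum.inr j) := fun h => h

lemma nbhd_inl {n : ℕ} (i : Fin n) :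
    (KnnMinusMatching n).neighborSet (Sum.inl i) = Sum.inr '' {i}ᶜ := by
  ext (j|j)
  · simpa [neighborSet] using adj_ll
  · simp [neighborSet, adj_lr, ne_comm]

lemma nbhd_inr {n : ℕ} (i : Fin n) :
    (KnnMinusMatching n).neighborSet (Sum.inr i) = Sum.inl '' {i}ᶜ := by
  ext (j|j)
  · simp [neighborSet, adj_rl, ne_comm]
  · simpa [neighborSet] using adj_rr

lemma ncard_compl_singleton {n : ℕ} (i : Fin n) : ({i}ᶜ : Set (Fin n)).ncard = n - 1 := by
  simp [Set.ncard_eq_toFinset_card', Finset.card_compl]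

lemma deg_eq {n : ℕ} (v : Fin n ⊕ Fin n) :
    ((KnnMinusMatching n).neighborSet v).ncard = n - 1 := by
  rcases v with i | i
  · rw [nbhd_inl, Set.ncard_image_of_injective _ Sum.inr_injective, ncard_compl_singleton]
  · rw [nbhd_inr, Set.ncard_image_of_injective _ Sum.inl_injective, ncard_compl_singleton]


lemma upper (n k : ℕ) (hn : 5 ≤ n) (P : Fin k → Set (Fin n ⊕ Fin n)) (α β : ℝ)
    (h : IsFATColoring (KnnMinusMatching n) k P α β) : k ≤ n := by
  obtain ⟨hne, hpart, hα0, hα1, hβ0, hβ1, hcnt⟩ := h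
  by_cases hk : k ≤ 1
  · omega
  push_neg at hk
  set G := KnnMinusMatching n with hG
  have h0n : 0 < n := by omega
  set z0 : Fin n := ⟨0, by omega⟩
  set z1 : Fin n := ⟨1, by omega⟩
  set z2 : Fin n := ⟨2, by omega⟩
  have hz10 : z1 ≠ z0 := by simp [z0, z1, Fin.ext_iff]
  have hz20 : z2 ≠ z0 := by simp [z0, z2, Fin.ext_iff]
  have hz21 : z2 ≠ z1 := by simp [z1, z2, Fin.ext_iff]
  set v0 : Fin n ⊕ Fin n := Sum.inl z0 with hv0
  obtain ⟨i, hvi, hiu⟩ := hpart v0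
  have hnotmem : ∀ (u : Fin n ⊕ Fin n) (j j' : Fin k), u ∈ P j → j' ≠ j → u ∉ P j' := by
    intro u j j' hu hjj' hu'
    obtain ⟨c, hc, hcu⟩ := hpart u
    exact hjj' ((hcu j' hu').trans (hcu j hu).symm)
  -- pick a class different from i
  set j : Fin k := if i = ⟨0, by omega⟩ then ⟨1, by omega⟩ else ⟨0, by omega⟩ with hj
  have hji : j ≠ i := by
    by_cases hc : i = ⟨0, by omega⟩
    · simp only [hj, if_pos hc, hc]
      simp [Fin.ext_iff]
    · simp only [hj, if_neg hc]
      exact fun e => hc e.symm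
  have hcast : ((n - 1 : ℕ) : ℝ) = (n:ℝ) - 1 := by
    have : 1 ≤ n := by omega
    push_cast [this]; ring
  have hn1pos : (0:ℝ) < (n:ℝ) - 1 := by
    have : (5:ℝ) ≤ (n:ℝ) := by exact_mod_cast hn
    linarith
  have hkey : ∀ (u : Fin n ⊕ Fin n) (c j' : Fin k), u ∈ P c → j' ≠ c →
      ((G.neighborSet u ∩ P j').ncard : ℝ) = α * ((n:ℝ) - 1) := by
    intro u c j' hu hj'c
    have := hcnt u j'
    rw [if_neg (hnotmem u c j' hu hj'c), deg_eq, hcast] at this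
    exact this
  by_cases hα : α = 0
  · -- all classes closed under adjacency; graph connected enough → contradiction with k ≥ 2
    exfalso
    have hstep : ∀ (u w : Fin n ⊕ Fin n) (c : Fin k), u ∈ P c → G.Adj u w → w ∈ P c := by
      intro u w c hu hadj
      obtain ⟨d, hd, hdu⟩ := hpart w
      by_cases hdc : d = c
      · subst hdc; exact hd
      exfalso
      have := hkey u c d hu hdc
      rw [hα, zero_mul, Nat.cast_eq_zero, Set.ncard_eq_zero (Set.toFinite _)] at this
      exact absurd (Set.mem_inter hadj hd : w ∈ G.neighborSet u ∩ P d) (by rw [this]; simp)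
    have h1 : ∀ m : Fin n, m ≠ z0 → Sum.inr m ∈ P i := by
      intro m hm
      exact hstep v0 _ i hvi (adj_lr.mpr fun e => hm e.symm)
    have h2 : ∀ m : Fin n, Sum.inl m ∈ P i := by
      intro m
      by_cases hm1 : m = z1
      · exact hstep _ _ i (h1 z2 hz20) (adj_rl.mpr (hm1 ▸ hz21))
      · exact hstep _ _ i (h1 z1 hz10) (adj_rl.mpr fun e => hm1 e.symm)
    have h3 : ∀ m : Fin n, Sum.inr m ∈ P i := by
      intro m
      by_cases hm0 : m = z0
      · exact hstep _ _ i (h2 z1) (adj_lr.mpr (hm0 ▸ hz10))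
      · exact h1 m hm0
    obtain ⟨w, hw⟩ := hne j
    have hwi : w ∈ P i := by
      rcases w with m | m
      · exact h2 m
      · exact h3 m
    obtain ⟨c, hc, hcu⟩ := hpart w
    exact hji ((hcu j hw).trans (hcu i hwi).symm)
  · -- α > 0 : counting argument
    have hαpos : 0 < α := lt_of_le_of_ne hα0 (Ne.symm hα)
    set a : ℕ := (G.neighborSet v0 ∩ P j).ncard with ha
    have haeq : (a:ℝ) = α * ((n:ℝ) - 1) := hkey v0 i j hvi hji
    have hapos : 1 ≤ a := by
      rcases Nat.eq_zero_or_pos a with h0 | h0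
      · rw [h0] at haeq
        have hpos2 : 0 < α * ((n:ℝ)-1) := mul_pos hαpos hn1pos
        push_cast at haeq
        linarith
      · exact h0
    have hall : ∀ j' : Fin k, j' ≠ i → (G.neighborSet v0 ∩ P j').ncard = a := by
      intro j' hj'
      have := hkey v0 i j' hvi hj'
      rw [← haeq] at this
      exact_mod_cast this
    set T : Finset (Fin k) := Finset.univ.erase i with hT
    set F : Fin k → Finset (Fin n ⊕ Fin n) := fun j' => (G.neighborSet v0 ∩ P j').toFinset with hF
    have hdisj : ∀ j1 ∈ T, ∀ j2 ∈ T, j1 ≠ j2 → Disjoint (F j1) (F j2) := by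
      intro j1 _ j2 _ h12
      rw [Finset.disjoint_left]
      intro x hx1 hx2
      rw [hF, Set.mem_toFinset] at hx1 hx2
      exact hnotmem x j2 j1 hx2.2 h12 hx1.2
    have hcardsum : (T.biUnion F).card = (k - 1) * a := by
      rw [Finset.card_biUnion hdisj]
      have : ∀ j' ∈ T, (F j').card = a := by
        intro j' hj'
        rw [hF, ← Set.ncard_eq_toFinset_card']
        exact hall j' (Finset.ne_of_mem_erase hj')
      rw [Finset.sum_congr rfl this, Finset.sum_const, smul_eq_mul]
      congr 1
      rw [hT, Finset.card_erase_of_mem (Finset.mem_univ i), Finset.card_univ, Fintype.card_fin]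
    have hsub : T.biUnion F ⊆ (G.neighborSet v0).toFinset := by
      intro x hx
      rw [Finset.mem_biUnion] at hx
      obtain ⟨j', _, hx⟩ := hx
      rw [hF, Set.mem_toFinset] at hx
      rw [Set.mem_toFinset]
      exact hx.1
    have hle : (k - 1) * a ≤ n - 1 := by
      rw [← hcardsum]
      calc (T.biUnion F).card ≤ (G.neighborSet v0).toFinset.card := Finset.card_le_card hsub
        _ = n - 1 := by rw [← Set.ncard_eq_toFinset_card', deg_eq]
    have hk1 : k - 1 ≤ (k - 1) * a := Nat.le_mul_of_pos_right (k - 1) hapos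
    omega

lemma construction (n : ℕ) (hn : 5 ≤ n) :
    ∃ P : Fin n → Set (Fin n ⊕ Fin n), ∃ α β : ℝ,
      IsFATColoring (KnnMinusMatching n) n P α β := by
  have hn1 : (1:ℝ) ≤ (n:ℝ) - 1 := by
    have : (5:ℝ) ≤ (n:ℝ) := by exact_mod_cast hn
    linarith
  have hcast : ((n - 1 : ℕ) : ℝ) = (n:ℝ) - 1 := by
    have : 1 ≤ n := by omega
    push_cast [this]; ring
  refine ⟨fun i => {Sum.inl i, Sum.inr i}, ((n:ℝ)-1)⁻¹, 0, ?_, ?_, ?_, ?_, le_rfl, zero_le_one, ?_⟩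
  · exact fun i => ⟨Sum.inl i, by simp⟩
  · rintro (i | i)
    · exact ⟨i, by simp, fun j hj => ((by simpa using hj : i = j)).symm⟩
    · exact ⟨i, by simp, fun j hj => ((by simpa using hj : i = j)).symm⟩
  · positivity
  · rw [inv_le_one_iff₀]; right; linarith
  · rintro (i | i) j <;> rw [deg_eq, hcast] <;> by_cases h : i = j
    · subst h
      have h1 : (KnnMinusMatching n).neighborSet (Sum.inl i) ∩ {Sum.inl i, Sum.inr i} = ∅ := by
        rw [nbhd_inl]; ext (m|m) <;> simp
      simp [h1]
    · have h1 : (KnnMinusMatching n).neighborSet (Sum.inl i) ∩ {Sum.inl j, Sum.inr j}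
          = {Sum.inr j} := by
        rw [nbhd_inl]; ext (m|m) <;> simp
        rintro rfl; exact fun hh => (h hh.symm).elim
      have hv : (Sum.inl i : Fin n ⊕ Fin n) ∉ ({Sum.inl j, Sum.inr j} : Set _) := by simp [h]
      rw [h1, if_neg hv, Set.ncard_singleton, inv_mul_cancel₀ (by linarith)]
      simp
    · subst h
      have h1 : (KnnMinusMatching n).neighborSet (Sum.inr i) ∩ {Sum.inl i, Sum.inr i} = ∅ := by
        rw [nbhd_inr]; ext (m|m) <;> simp
      simp [h1]
    · have h1 : (KnnMinusMatching n).neighborSet (Sum.inr i) ∩ {Sum.inl j, Sum.inr j}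
          = {Sum.inl j} := by
        rw [nbhd_inr]; ext (m|m) <;> simp
        rintro rfl; exact fun hh => (h hh.symm).elim
      have hv : (Sum.inr i : Fin n ⊕ Fin n) ∉ ({Sum.inl j, Sum.inr j} : Set _) := by simp [h]
      rw [h1, if_neg hv, Set.ncard_singleton, inv_mul_cancel₀ (by linarith)]
      simp

theorem fat_Knn_minus_matching (n : ℕ) (hodd : Odd n) (hn : 5 ≤ n) :
    (KnnMinusMatching n).chromaticNumber = (2 : ℕ∞) ∧
    fatChromaticNumber (KnnMinusMatching n) = n := by

  constructor
  · have hcol : (KnnMinusMatching n).Colorable 2 := by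
      refine ⟨Coloring.mk (Sum.elim (fun _ => 0) (fun _ => 1)) ?_⟩
      rintro (i|i) (j|j) h
      · exact absurd h adj_ll
      · simp
      · simp
      · exact absurd h adj_rr
    have h1 : ¬ (KnnMinusMatching n).Colorable 1 := by
      rintro ⟨c⟩
      have hadj : (KnnMinusMatching n).Adj (Sum.inl ⟨0, by omega⟩) (Sum.inr ⟨1, by omega⟩) :=
        adj_lr.mpr (by simp [Fin.ext_iff])
      exact c.valid hadj (Subsingleton.elim _ _)
    have hub : (KnnMinusMatching n).chromaticNumber ≤ 2 := by
      exact_mod_cast chromaticNumber_le_iff_colorable.mpr hcol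
    have hlb : (2:ℕ∞) ≤ (KnnMinusMatching n).chromaticNumber := by
      rw [show (2:ℕ∞) = 1 + 1 from rfl, ENat.add_one_le_iff (by simp)]
      refine lt_of_not_ge fun hle => h1 ?_
      exact chromaticNumber_le_iff_colorable.mp (by exact_mod_cast hle)
    exact le_antisymm hub hlb
  · have hmem : n ∈ {k : ℕ | ∃ P : Fin k → Set (Fin n ⊕ Fin n), ∃ α β : ℝ,
        IsFATColoring (KnnMinusMatching n) k P α β} := construction n hn
    have hub : ∀ k ∈ {k : ℕ | ∃ P : Fin k → Set (Fin n ⊕ Fin n), ∃ α β : ℝ,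
        IsFATColoring (KnnMinusMatching n) k P α β}, k ≤ n := by
      rintro k ⟨P, α, β, h⟩
      exact upper n k hn P α β h
    exact le_antisymm (csSup_le ⟨n, hmem⟩ hub) (le_csSup ⟨n, hub⟩ hmem)
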